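/- arXiv:math/0505552 — 5 statements merged into one kernel-verified Lean document; each statement's English description precedes it below -/
import Mathlib

section
/- The determinant of the (2n-1)×(2n-1) matrix whose columns k = 1,…,n-1 consist of entries λ_k^j - λ_n^j for j = 1,…,n and λ_k^{-j} - λ_n^{-j} for j = 1,…,n-1, and whose columns k = n,…,2n-1 consist of entries j λ_{k-n+1}^j for j = 1,…,n and -j λ_{k-n+1}^{-j} for j = 1,…,n-1, equals ∏_{1 ≤ j < k ≤ n} (λ_k - λ_j)^4 / ∏_{l=1}^n λ_l^{2n-3}. -/
/-!
Border the matrix with the row of the exponent `0` and the column `(λₙ^e)ₑ`; adding that column to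
the first `n - 1` columns removes the differences, so the determinant is that of the matrix with
columns `(λₖ^e)ₑ` and `(e λₖ^e)ₑ`. Shifting every exponent by `n - 1` writes this matrix as a row
permutation of the confluent Vandermonde matrix of `λ₁, …, λₙ` (exponents `0, …, 2n - 1`) times a
block triangular matrix of determinant `∏ λₗ^(3 - 2n)`.

The confluent Vandermonde determinant is `±∏_{j<k} (λₖ - λⱼ)^4`: it is the value at `t = 0` of the
Vandermonde determinant at the nodes `λₖ` and `λₖ + t`, divided by `tⁿ`. Both this sign and the sign
of the row permutation are `(-1)^⌊n/2⌋`, the sign of the reversal of `n` letters.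
-/

open Finset Equiv Matrix Polynomial

namespace Fin

def revPrefix {N : ℕ} (k : ℕ) (hk : k ≤ N) : Perm (Fin N) :=
  Function.Involutive.toPerm (fun j => if h : (j : ℕ) < k then ⟨k - 1 - j, by omega⟩ else j)
    (by intro j; dsimp only; split_ifs <;> ext <;> simp only at * <;> omega)

theorem val_revPrefix {N k : ℕ} (hk : k ≤ N) (j : Fin N) :
    (revPrefix k hk j : ℕ) = if (j : ℕ) < k then k - 1 - j else j := by
  show ((if h : (j : ℕ) < k then (⟨k - 1 - j, by omega⟩ : Fin N) else j : Fin N) : ℕ) = _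
  split_ifs <;> rfl

theorem revPrefix_succ {N k : ℕ} (hk : k < N) :
    revPrefix (k + 1) hk = cycleRange ⟨k, hk⟩ * revPrefix k hk.le := by
  ext j
  have h := val_revPrefix hk.le j
  rw [Perm.mul_apply, val_revPrefix]
  rcases lt_trichotomy (j : ℕ) k with hj | hj | hj
  · rw [coe_cycleRange_of_le (by rw [Fin.le_def]; simp only [h]; split_ifs <;> omega)]
    simp only [Fin.ext_iff, h]; split_ifs <;> omega
  · rw [coe_cycleRange_of_le (by rw [Fin.le_def]; simp only [h]; split_ifs <;> omega)]
    simp only [Fin.ext_iff, h]; split_ifs <;> omega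
  · rw [cycleRange_of_gt (by rw [Fin.lt_def]; simp only [h]; split_ifs <;> omega), h]
    split_ifs <;> omega

theorem sign_revPrefix {N k : ℕ} (hk : k ≤ N) : Perm.sign (revPrefix k hk) = (-1) ^ (k / 2) := by
  induction k with
  | zero => rw [show revPrefix 0 hk = 1 by ext; simp [val_revPrefix]]; simp
  | succ k ih =>
    rw [revPrefix_succ, Perm.sign_mul, sign_cycleRange, ih, ← pow_add,
      Int.units_pow_eq_pow_mod_two, Int.units_pow_eq_pow_mod_two (n := (k + 1) / 2)]
    congr 1
    rcases Nat.even_or_odd' k with ⟨a, rfl | rfl⟩ <;> dsimp only <;> omega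

theorem revPerm_eq_revPrefix {n : ℕ} : (revPerm : Perm (Fin n)) = revPrefix n le_rfl := by
  ext j; simp [val_revPrefix]; omega

theorem castAdd_lt_natAdd {m n : ℕ} (i : Fin m) (j : Fin n) : castAdd n i < natAdd m j := by
  rw [Fin.lt_def]; simp; omega

theorem val_succAbove {m : ℕ} (i : Fin (m + 1)) (j : Fin m) :
    (i.succAbove j : ℕ) = if (j : ℕ) < i then (j : ℕ) else (j : ℕ) + 1 := by
  unfold Fin.succAbove; split_ifs <;> simp_all [Fin.lt_def]

theorem prod_univ_eq_prod_Iio_mul_mul_prod_Ioi {M : Type*} [CommMonoid M] {n : ℕ} (g : Fin n → M)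
    (a : Fin n) : ∏ b, g b = (∏ b ∈ Iio a, g b) * (g a * ∏ b ∈ Ioi a, g b) := by
  rw [mul_prod_Ioi_eq_prod_Ici, ← prod_union (disjoint_left.2 fun b h1 h2 =>
    (mem_Iio.1 h1).not_ge (mem_Ici.1 h2))]
  congr 1; ext b; simpa using lt_or_ge b a

theorem prod_prod_Ioi_add {M : Type*} [CommMonoid M] {m n : ℕ}
    (f : Fin (m + n) → Fin (m + n) → M) :
    ∏ a, ∏ b ∈ Ioi a, f a b =
      (∏ i, ∏ j ∈ Ioi i, f (castAdd n i) (castAdd n j)) *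
        (∏ i, ∏ j, f (castAdd n i) (natAdd m j)) *
          ∏ i, ∏ j ∈ Ioi i, f (natAdd m i) (natAdd m j) := by
  have h_Ioi {k : ℕ} (g : Fin k → M) (a) : ∏ b ∈ Ioi a, g b = ∏ b, if a < b then g b else 1 := by
    rw [← prod_filter]; congr 1; ext; simp
  have h_castAdd (i j : Fin m) : castAdd n i < castAdd n j ↔ i < j := Iff.rfl
  have h_natAdd (i : Fin m) (j : Fin n) : ¬ natAdd m j < castAdd n i :=
    (castAdd_lt_natAdd i j).not_gt
  simp_rw [h_Ioi, Fin.prod_univ_add]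
  simp [h_castAdd, castAdd_lt_natAdd, h_natAdd, prod_mul_distrib, mul_assoc]

theorem prod_prod_Ioi_eq_prod_range {M : Type*} [CommMonoid M] (n : ℕ) (g : ℕ → ℕ → M) :
    ∏ i : Fin n, ∏ j ∈ Ioi i, g i j = ∏ i ∈ range n, ∏ j ∈ Ioo i n, g i j := by
  rw [← Fin.prod_univ_eq_prod_range (fun i => ∏ j ∈ Ioo i n, g i j)]
  refine prod_congr rfl fun i _ => ?_
  rw [← Fin.map_valEmbedding_Ioi, prod_map]
  rfl

-- Reversing the nodes of a Vandermonde matrix permutes its rows by `revPerm`.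
theorem prod_prod_Iio_sub {R : Type*} [CommRing R] {n : ℕ} (x : Fin n → R) :
    ∏ i, ∏ j ∈ Iio i, (x j - x i) = (-1) ^ (n / 2) * ∏ i, ∏ j ∈ Ioi i, (x j - x i) := by
  have h := det_vandermonde (x ∘ revPerm)
  have h_sign : Perm.sign (revPerm : Perm (Fin n)) = (-1) ^ (n / 2) := by
    rw [revPerm_eq_revPrefix, sign_revPrefix]
  rw [show vandermonde (x ∘ revPerm) = (vandermonde x).submatrix revPerm id from rfl,
    det_permute, det_vandermonde, h_sign] at h
  rw [← Fintype.prod_equiv revPerm (fun i => ∏ j ∈ Ioi i, (x (rev j) - x (rev i))) _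
    (fun i => by rw [revPerm_apply, ← map_revPerm_Ioi, prod_map]; rfl)]
  simpa using h.symm

end Fin

theorem natCast_mul_pow_sub_one_mul {R : Type*} [Semiring R] (a : R) (p : ℕ) :
    (p : R) * a ^ (p - 1) * a = p * a ^ p := by
  cases p <;> simp [pow_succ, mul_assoc]

namespace Matrix

variable {R : Type*} [CommRing R]

def confluentVandermonde {n : ℕ} (x : Fin n → R) : Matrix (Fin (n + n)) (Fin (n + n)) R :=
  .of (Fin.addCases (fun i j => x i ^ (j : ℕ)) (fun i j => (j : ℕ) * x i ^ ((j : ℕ) - 1)))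

noncomputable def divDiffVandermonde {n : ℕ} (x : Fin n → R) :
    Matrix (Fin (n + n)) (Fin (n + n)) R[X] :=
  .of (Fin.addCases (fun i j => C (x i) ^ (j : ℕ)) (fun i j => divX ((X + C (x i)) ^ (j : ℕ))))

theorem det_vandermonde_append_add_X {n : ℕ} (x : Fin n → R) :
    (vandermonde (Fin.append (fun i => C (x i)) fun i => X + C (x i))).det =
      X ^ n * (divDiffVandermonde x).det := by
  let B : Matrix (Fin (n + n)) (Fin (n + n)) R[X] :=
    .of (Fin.addCases (fun i => Pi.single (Fin.castAdd n i) 1)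
      (fun i => Pi.single (Fin.castAdd n i) 1 + Pi.single (Fin.natAdd n i) X))
  have hV : vandermonde (Fin.append (fun i => C (x i)) fun i => X + C (x i)) =
      B * divDiffVandermonde x := by
    refine Matrix.ext fun a b => ?_
    induction a using Fin.addCases with
    | left i => simp [B, divDiffVandermonde, Matrix.mul_apply, Pi.single_apply,
        -Fin.natAdd_eq_addNat]
    | right i =>
      simp [B, divDiffVandermonde, Matrix.mul_apply, Pi.single_apply, add_mul,
        Finset.sum_add_distrib, -Fin.natAdd_eq_addNat]
      conv_lhs => rw [← divX_mul_X_add ((X + C (x i)) ^ (b : ℕ))]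
      simp [coeff_X_add_C_pow]; ring
  have hB : B.det = X ^ n := by
    rw [det_of_isLowerTriangular]
    · simp [B, Fin.prod_univ_add, (Fin.castAdd_lt_natAdd _ _).ne', -Fin.natAdd_eq_addNat]
    · intro a b hab
      induction a using Fin.addCases with
      | left i =>
        have hab : Fin.castAdd n i < b := hab
        simp [B, Pi.single_eq_of_ne hab.ne', -Fin.natAdd_eq_addNat]
      | right i =>
        have hab : Fin.natAdd n i < b := hab
        simp [B, Pi.single_eq_of_ne hab.ne',
          Pi.single_eq_of_ne ((Fin.castAdd_lt_natAdd i i).trans hab).ne', -Fin.natAdd_eq_addNat]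
  rw [hV, det_mul, hB]

theorem det_divDiffVandermonde {n : ℕ} (x : Fin n → R) :
    (divDiffVandermonde x).det = (∏ i, ∏ j ∈ Ioi i, (C (x j) - C (x i))) *
      (∏ i, (∏ j ∈ Iio i, (X + C (x j) - C (x i))) * ∏ j ∈ Ioi i, (X + C (x j) - C (x i))) *
        ∏ i, ∏ j ∈ Ioi i, (X + C (x j) - (X + C (x i))) := by
  apply (isRegular_X_pow (R := R) n).left
  simp only
  rw [← det_vandermonde_append_add_X, det_vandermonde, Fin.prod_prod_Ioi_add]
  simp only [Fin.append_left, Fin.append_right]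
  rw [prod_congr rfl fun i _ => Fin.prod_univ_eq_prod_Iio_mul_mul_prod_Ioi _ i]
  simp only [add_sub_cancel_right, prod_mul_distrib, prod_const, card_univ, Fintype.card_fin]
  ring

theorem map_evalRingHom_zero_divDiffVandermonde {n : ℕ} (x : Fin n → R) :
    (evalRingHom 0).mapMatrix (divDiffVandermonde x) = confluentVandermonde x := by
  refine Matrix.ext fun a b => ?_
  induction a using Fin.addCases with
  | left i => simp [confluentVandermonde, divDiffVandermonde]
  | right i =>
    simp [confluentVandermonde, divDiffVandermonde, ← coeff_zero_eq_eval_zero, coeff_divX,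
      coeff_X_add_C_pow, -Fin.natAdd_eq_addNat, mul_comm]

theorem det_confluentVandermonde {n : ℕ} (x : Fin n → R) :
    (confluentVandermonde x).det = (-1) ^ (n / 2) * (∏ i, ∏ j ∈ Ioi i, (x j - x i)) ^ 4 := by
  rw [← map_evalRingHom_zero_divDiffVandermonde, ← RingHom.map_det, det_divDiffVandermonde]
  simp only [coe_evalRingHom, eval_mul, eval_prod, eval_sub, eval_add, eval_X, eval_C, zero_add,
    prod_mul_distrib, Fin.prod_prod_Iio_sub]
  ring

theorem det_eq_det_submatrix_succAbove {m : ℕ} (M : Matrix (Fin (m + 1)) (Fin (m + 1)) R)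
    (i : Fin (m + 1)) (hM : M i = Pi.single i 1) :
    M.det = (M.submatrix i.succAbove i.succAbove).det := by
  rw [det_succ_row M i, sum_eq_single i (fun j _ hj => by simp [hM, hj]) (by simp)]
  simp [hM, ← two_mul]

theorem det_mul_one_add_vecMulVec_single {ι : Type*} [Fintype ι] [DecidableEq ι]
    (M : Matrix ι ι R) {l : ι} {w : ι → R} (hw : w l = 0) :
    (M * (1 + vecMulVec (Pi.single l 1) w)).det = M.det := by
  rw [det_mul, vecMulVec_eq Unit, det_one_add_replicateCol_mul_replicateRow]
  simp [hw]

end Matrix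

section LaurentConfluent

variable {K : Type*} [Field K] (n : ℕ)

/-- Rows `r = 0, …, 2n-1` of the bordered matrix carry the exponents
`1, …, n-1, 0, -1, …, -(n-1), n`; shifted by `n - 1` these are `n, …, 2n-2, n-1, …, 0, 2n-1`,
the values of `exponentPerm n`. -/
def exponentPerm : Perm (Fin (n + n)) :=
  Fin.revPrefix (2 * n - 1) (by omega) * Fin.revPrefix (n - 1) (by omega)

def rowExponent (r : Fin (n + n)) : ℤ := (exponentPerm n r : ℕ) - ((n : ℤ) - 1)

def laurentMatrix (lam : ℕ → K) : Matrix (Fin (n + n)) (Fin (n + n)) K :=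
  .of fun r c => if (c : ℕ) < n then lam c ^ rowExponent n r
    else rowExponent n r * lam (c - n) ^ rowExponent n r

def exponentShiftMatrix (lam : ℕ → K) : Matrix (Fin (n + n)) (Fin (n + n)) K :=
  reindex finSumFinEquiv finSumFinEquiv <| fromBlocks
    (diagonal fun k => lam k ^ (1 - (n : ℤ)))
    (diagonal fun k => -((n : K) - 1) * lam k ^ (1 - (n : ℤ)))
    0 (diagonal fun k => lam k ^ (2 - (n : ℤ)))

def differenceMatrix (lam : ℕ → K) : Matrix (Fin (2 * n - 1)) (Fin (2 * n - 1)) K :=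
  Matrix.of fun j k : Fin (2 * n - 1) =>
    let e : ℤ :=
      if (j : ℕ) < n - 1 then (j : ℤ) + 1
      else if (j : ℕ) < 2 * n - 2 then -((j : ℤ) - ((n : ℤ) - 1) + 1)
      else (n : ℤ)
    if (k : ℕ) < n - 1 then lam k ^ e - lam (n - 1) ^ e
    else (e : K) * lam ((k : ℕ) - (n - 1)) ^ e

variable {n}

theorem sign_exponentPerm : Perm.sign (exponentPerm n) = (-1) ^ (n / 2) := by
  rw [exponentPerm, Perm.sign_mul, Fin.sign_revPrefix, Fin.sign_revPrefix, ← pow_add,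
    Int.units_pow_eq_pow_mod_two, Int.units_pow_eq_pow_mod_two (n := n / 2)]
  congr 1
  rcases Nat.even_or_odd' n with ⟨a, rfl | rfl⟩ <;> omega

theorem rowExponent_eq (r : Fin (n + n)) :
    rowExponent n r = if (r : ℕ) < n - 1 then (r : ℤ) + 1
      else if (r : ℕ) < 2 * n - 1 then (n : ℤ) - 1 - r else n := by
  rw [rowExponent, exponentPerm, Perm.mul_apply, Fin.val_revPrefix, Fin.val_revPrefix]
  split_ifs <;> omega

theorem det_exponentShiftMatrix {lam : ℕ → K} (hlam : ∀ k < n, lam k ≠ 0) :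
    (exponentShiftMatrix n lam).det = ∏ k ∈ range n, lam k ^ (3 - 2 * (n : ℤ)) := by
  rw [exponentShiftMatrix, det_reindex_self, det_fromBlocks_zero₂₁, det_diagonal, det_diagonal,
    ← prod_mul_distrib, ← Fin.prod_univ_eq_prod_range]
  refine prod_congr rfl fun k _ => ?_
  rw [← zpow_add₀ (hlam k k.2)]
  ring_nf

theorem laurentMatrix_eq_mul {lam : ℕ → K} (hlam : ∀ k < n, lam k ≠ 0) :
    laurentMatrix n lam =
      (confluentVandermonde fun k : Fin n => lam k)ᵀ.submatrix (exponentPerm n) id *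
        exponentShiftMatrix n lam := by
  refine Matrix.ext fun r c => ?_
  induction c using Fin.addCases with
  | left k =>
    simp [laurentMatrix, exponentShiftMatrix, Matrix.mul_apply, Fin.sum_univ_add,
      confluentVandermonde, diagonal_apply, -Fin.natAdd_eq_addNat]
    rw [rowExponent, sub_eq_add_neg, zpow_add₀ (hlam k k.2), zpow_natCast, neg_sub]
  | right k =>
    simp [laurentMatrix, exponentShiftMatrix, Matrix.mul_apply, Fin.sum_univ_add,
      confluentVandermonde, diagonal_apply, -Fin.natAdd_eq_addNat]
    rw [rowExponent, sub_eq_add_neg, zpow_add₀ (hlam k k.2), zpow_natCast, neg_sub,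
      show (2 : ℤ) - n = 1 - n + 1 by ring, zpow_add₀ (hlam k k.2), zpow_one]
    push_cast
    linear_combination
      -lam k ^ (1 - (n : ℤ)) * natCast_mul_pow_sub_one_mul (lam k) (exponentPerm n r)

theorem det_differenceMatrix (hn : 0 < n) (lam : ℕ → K) :
    (differenceMatrix n lam).det = (laurentMatrix n lam).det := by
  let l : Fin (n + n) := ⟨n - 1, by omega⟩
  let w : Fin (n + n) → K := fun c => if (c : ℕ) < n - 1 then -1 else 0
  let U := 1 + vecMulVec (Pi.single l 1) w
  have hTU (r c) :
      (laurentMatrix n lam * U) r c = laurentMatrix n lam r c + laurentMatrix n lam r l * w c := by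
    simp [U, Matrix.mul_add, mul_vecMulVec, vecMulVec_apply]
  let f : Fin (2 * n - 1 + 1) ≃ Fin (n + n) := finCongr (by omega)
  have hf (r) : (f r : ℕ) = r := rfl
  let M := (laurentMatrix n lam * U).submatrix f f
  let i : Fin (2 * n - 1 + 1) := ⟨n - 1, by omega⟩
  have hM_row : M i = Pi.single i 1 := by
    have he : rowExponent n (f i) = 0 := by rw [rowExponent_eq]; simp [hf, i]; omega
    ext j
    simp only [M, submatrix_apply]
    rw [hTU]
    simp only [laurentMatrix, of_apply, he, hf, w, l, i, Pi.single_apply, Fin.ext_iff]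
    split_ifs <;> simp <;> omega
  have hM_minor : M.submatrix i.succAbove i.succAbove = differenceMatrix n lam := by
    have hval (j : Fin (2 * n - 1)) :
        (f (i.succAbove j) : ℕ) = if (j : ℕ) < n - 1 then (j : ℕ) else (j : ℕ) + 1 := by
      rw [hf, Fin.val_succAbove]
    ext j k
    have he : rowExponent n (f (i.succAbove j)) = if (j : ℕ) < n - 1 then (j : ℤ) + 1
        else if (j : ℕ) < 2 * n - 2 then -((j : ℤ) - ((n : ℤ) - 1) + 1) else (n : ℤ) := by
      rw [rowExponent_eq, hval]; split_ifs <;> omega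
    simp only [M, submatrix_apply]
    rw [hTU]
    simp only [laurentMatrix, differenceMatrix, of_apply, hval, w, l, ← he]
    generalize rowExponent n (f (i.succAbove j)) = e
    by_cases hk : (k : ℕ) < n - 1
    · simp [hk, hn, show (k : ℕ) < n by omega, sub_eq_add_neg]
    · simp [hk, show ¬ (k : ℕ) + 1 < n by omega, show ¬ (k : ℕ) + 1 < n - 1 by omega,
        show (k : ℕ) + 1 - n = k - (n - 1) by omega]
  rw [← hM_minor, ← det_eq_det_submatrix_succAbove M i hM_row, det_submatrix_equiv_self,
    det_mul_one_add_vecMulVec_single _ (by simp [w, l])]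

end LaurentConfluent

theorem stmt_2_general (n : ℕ) (lam : ℕ → ℂ)
    (h0 : ∀ l < n, lam l ≠ 0) :
    (Matrix.of fun j k : Fin (2 * n - 1) =>
        let e : ℤ :=
          if (j : ℕ) < n - 1 then (j : ℤ) + 1
          else if (j : ℕ) < 2 * n - 2 then -((j : ℤ) - ((n : ℤ) - 1) + 1)
          else (n : ℤ)
        if (k : ℕ) < n - 1 then
          lam k ^ e - lam (n - 1) ^ e
        else ((e : ℂ)) * lam ((k : ℕ) - (n - 1)) ^ e).det
      = (∏ j ∈ range n, ∏ k ∈ Ioo j n, (lam k - lam j) ^ 4) /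
          ∏ l ∈ range n, lam l ^ (2 * (n : ℤ) - 3) := by
  rcases Nat.eq_zero_or_pos n with rfl | hn
  · simp
  change (differenceMatrix n lam).det = _
  rw [det_differenceMatrix hn, laurentMatrix_eq_mul h0, det_mul, det_permute, det_transpose,
    det_confluentVandermonde, det_exponentShiftMatrix h0, sign_exponentPerm, ← mul_assoc]
  push_cast
  rw [← pow_add, Even.neg_one_pow ⟨n / 2, rfl⟩, one_mul,
    Fin.prod_prod_Ioi_eq_prod_range n fun j k => lam k - lam j, div_eq_mul_inv, ← prod_inv_distrib]
  congr 1
  · simp only [prod_pow]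
  · refine prod_congr rfl fun l _ => ?_
    rw [← _root_.zpow_neg]
    ring_nf

/-- Determinant evaluation (`(\ref{TN})` in the paper): rows indexed by
`j = 1,…,n-1` with entries `(λ_k^j - λ_n^j, j λ_k^j)`, rows `j = 1,…,n-1`
with entries `(λ_k^{-j} - λ_n^{-j}, -j λ_k^{-j})`, and a final row
`(λ_k^n - λ_n^n, n λ_k^n)`; the value is
`∏_{1≤j<k≤n} (λ_k - λ_j)^4 / ∏_{l=1}^n λ_l^{2n-3}`.
Here `lam 0, …, lam (n-1)` play the role of `λ₁, …, λₙ`. -/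
theorem stmt_2 (n : ℕ) (hn : 1 ≤ n) (lam : ℕ → ℂ)
    (h0 : ∀ l < n, lam l ≠ 0)
    (hdist : ∀ l < n, ∀ m < n, l ≠ m → lam l ≠ lam m) :
    (Matrix.of fun j k : Fin (2 * n - 1) =>
        let e : ℤ :=
          if (j : ℕ) < n - 1 then (j : ℤ) + 1
          else if (j : ℕ) < 2 * n - 2 then -((j : ℤ) - ((n : ℤ) - 1) + 1)
          else (n : ℤ)
        if (k : ℕ) < n - 1 then
          lam k ^ e - lam (n - 1) ^ e
        else ((e : ℂ)) * lam ((k : ℕ) - (n - 1)) ^ e).det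
      = (∏ j ∈ range n, ∏ k ∈ Ioo j n, (lam k - lam j) ^ 4) /
          ∏ l ∈ range n, lam l ^ (2 * (n : ℤ) - 3) :=
  stmt_2_general n lam h0
end

section
/- For a real symmetric tridiagonal n×n matrix T with diagonal entries a_n,…,a_1 (top to bottom) and off-diagonal entries b_{n-1},…,b_1 all positive, with distinct eigenvalues λ₁ > … > λₙ and q_k > 0 the first component of the normalized eigenvector for λ_k, one has ∏_{1≤i<j≤n}(λ_i - λ_j)² = (∏_{i=1}^{n-1} b_i^{2i}) / (∏_{i=1}^n q_i²). -/
/-!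
For tridiagonal `T` the Krylov matrix `K` with columns `T ^ j e₀` is upper triangular with
diagonal `1, b₀, b₀ b₁, …`, so `det K = ∏ bᵢ ^ (n - 1 - i)`. If `P` has the unit eigenvectors as
rows, symmetry of `T` gives `(P K)ₖⱼ = λₖ ^ j qₖ`, i.e. `P K = diag q * V λ` with `V` the
Vandermonde matrix. Eigenvectors for distinct eigenvalues are orthogonal, so `det P ^ 2 = 1`, and
squaring determinants gives `∏ bᵢ ^ (2 (n - 1 - i)) = ∏ qₖ ^ 2 * ∏_{i<j} (λᵢ - λⱼ) ^ 2`.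
-/

open Finset Matrix

theorem Finset.prod_range_succ_prod_range {M : Type*} [CommMonoid M] (f : ℕ → M) (n : ℕ) :
    ∏ j ∈ range (n + 1), ∏ i ∈ range j, f i = ∏ i ∈ range n, f i ^ (n - i) := by
  induction n with
  | zero => simp
  | succ n ih =>
    rw [prod_range_succ, ih, prod_range_succ f, prod_range_succ (fun i => f i ^ (n + 1 - i)),
      Nat.add_sub_cancel_left, pow_one, ← mul_assoc, ← prod_mul_distrib]
    congr 1
    refine prod_congr rfl fun i hi => ?_
    rw [← pow_succ, Nat.sub_add_comm (mem_range.mp hi).le]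

namespace Matrix

variable {R ι : Type*} {n : ℕ}

def tridiagonal [Zero R] (a : Fin n → R) (b : ℕ → R) : Matrix (Fin n) (Fin n) R :=
  of fun i j =>
    if (i : ℕ) = j then a i
    else if (i : ℕ) + 1 = j then b i
    else if (j : ℕ) + 1 = i then b j
    else 0

section Tridiagonal

variable [Zero R] (a : Fin n → R) (b : ℕ → R)

theorem tridiagonal_isSymm : (tridiagonal a b).IsSymm := by
  ext i j
  simp only [transpose_apply, tridiagonal, of_apply]
  split_ifs <;> first | omega | rfl | congr 1; omega

theorem tridiagonal_apply_of_add_one_lt {i j : Fin n} (h : (j : ℕ) + 1 < i) :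
    tridiagonal a b i j = 0 := by
  simp only [tridiagonal, of_apply]
  rw [if_neg (by omega), if_neg (by omega), if_neg (by omega)]

theorem tridiagonal_apply_of_add_one_eq {i j : Fin n} (h : (j : ℕ) + 1 = i) :
    tridiagonal a b i j = b j := by
  simp only [tridiagonal, of_apply]
  rw [if_neg (by omega), if_neg (by omega), if_pos h]

end Tridiagonal

def krylov [Semiring R] (A : Matrix (Fin n) (Fin n) R) (x : Fin n → R) :
    Matrix (Fin n) (Fin n) R :=
  of fun i j => (A ^ (j : ℕ) *ᵥ x) i

section KrylovTridiagonal

variable [NeZero n] (a : Fin n → R) (b : ℕ → R)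

theorem tridiagonal_pow_mulVec_single_apply_of_lt [CommSemiring R] {j : ℕ} {i : Fin n} (h : j < i) :
    (tridiagonal a b ^ j *ᵥ Pi.single 0 1) i = 0 := by
  induction j generalizing i with
  | zero =>
    rw [pow_zero, one_mulVec]
    exact Pi.single_eq_of_ne (fun hi => by simp [hi] at h) _
  | succ j ih =>
    rw [pow_succ', ← mulVec_mulVec, mulVec, dotProduct]
    refine sum_eq_zero fun m _ => ?_
    by_cases hm : j < m
    · rw [ih hm, mul_zero]
    · rw [tridiagonal_apply_of_add_one_lt a b (by omega), zero_mul]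

theorem tridiagonal_pow_mulVec_single_apply_self [CommSemiring R] {j : ℕ} {i : Fin n}
    (h : (i : ℕ) = j) :
    (tridiagonal a b ^ j *ᵥ Pi.single 0 1) i = ∏ t ∈ range j, b t := by
  induction j generalizing i with
  | zero =>
    obtain rfl : i = 0 := Fin.ext h
    simp
  | succ j ih =>
    rw [pow_succ', ← mulVec_mulVec, mulVec, dotProduct, sum_eq_single ⟨j, by omega⟩,
      ih rfl, tridiagonal_apply_of_add_one_eq a b h.symm, prod_range_succ, mul_comm]
    · intro m _ hm
      rcases lt_or_gt_of_ne (Fin.val_ne_of_ne hm) with hlt | hgt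
      · rw [tridiagonal_apply_of_add_one_lt a b (by simp at hlt ⊢; omega), zero_mul]
      · rw [tridiagonal_pow_mulVec_single_apply_of_lt a b hgt, mul_zero]
    · simp

theorem krylov_tridiagonal_isUpperTriangular [CommSemiring R] :
    (krylov (tridiagonal a b) (Pi.single 0 1)).IsUpperTriangular :=
  fun _ _ h => tridiagonal_pow_mulVec_single_apply_of_lt a b h

theorem det_krylov_tridiagonal [CommRing R] :
    (krylov (tridiagonal a b) (Pi.single 0 1)).det =
      ∏ i ∈ range (n - 1), b i ^ (n - 1 - i) := by
  rw [det_of_isUpperTriangular (krylov_tridiagonal_isUpperTriangular a b)]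
  simp only [krylov, of_apply, tridiagonal_pow_mulVec_single_apply_self a b rfl]
  rw [Fin.prod_univ_eq_prod_range (fun j => ∏ t ∈ range j, b t)]
  obtain ⟨m, rfl⟩ := Nat.exists_eq_add_one_of_ne_zero (NeZero.ne n)
  rw [prod_range_succ_prod_range, Nat.add_sub_cancel]

end KrylovTridiagonal

section Eigenvectors

variable [Fintype ι]

theorem pow_mulVec_of_mulVec_eq_smul [DecidableEq ι] [CommSemiring R] {A : Matrix ι ι R}
    {v : ι → R} {μ : R} (h : A *ᵥ v = μ • v) (j : ℕ) : A ^ j *ᵥ v = μ ^ j • v := by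
  induction j with
  | zero => simp
  | succ j ih => rw [pow_succ', ← mulVec_mulVec, ih, mulVec_smul, h, smul_smul, pow_succ]

theorem IsSymm.mulVec_dotProduct [CommSemiring R] {A : Matrix ι ι R} (hA : A.IsSymm)
    (v w : ι → R) : A *ᵥ v ⬝ᵥ w = v ⬝ᵥ A *ᵥ w := by
  rw [dotProduct_mulVec, ← mulVec_transpose, hA.eq]

theorem IsSymm.dotProduct_eq_zero_of_mulVec_eq_smul [CommRing R] [IsDomain R]
    {A : Matrix ι ι R} (hA : A.IsSymm) {v w : ι → R} {μ ν : R}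
    (hv : A *ᵥ v = μ • v) (hw : A *ᵥ w = ν • w) (hne : μ ≠ ν) : v ⬝ᵥ w = 0 := by
  have h := hA.mulVec_dotProduct v w
  rw [hv, hw, smul_dotProduct, dotProduct_smul, smul_eq_mul, smul_eq_mul] at h
  exact (mul_eq_mul_right_iff.mp h).resolve_left hne

theorem IsSymm.mul_transpose_eq_one_of_eigenvectors [DecidableEq ι] [CommRing R] [IsDomain R]
    {A : Matrix ι ι R} (hA : A.IsSymm) {v : ι → ι → R} {lam : ι → R} (hlam : Function.Injective lam)
    (hv : ∀ k, A *ᵥ v k = lam k • v k) (hnorm : ∀ k, v k ⬝ᵥ v k = 1) :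
    of v * (of v)ᵀ = 1 := by
  ext k l
  rw [mul_apply]
  change v k ⬝ᵥ v l = _
  rcases eq_or_ne k l with rfl | hkl
  · rw [hnorm, one_apply_eq]
  · rw [one_apply_ne hkl, hA.dotProduct_eq_zero_of_mulVec_eq_smul (hv k) (hv l) (hlam.ne hkl)]

theorem det_sq_eq_one_of_mul_transpose_eq_one [DecidableEq ι] [CommRing R] {P : Matrix ι ι R}
    (h : P * Pᵀ = 1) : P.det ^ 2 = 1 := by
  have h := congrArg det h
  rwa [det_mul, det_transpose, det_one, ← sq] at h

end Eigenvectors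

theorem IsSymm.mul_krylov_eq_diagonal_mul_vandermonde [CommRing R]
    {A : Matrix (Fin n) (Fin n) R} (hA : A.IsSymm) {v : Fin n → Fin n → R} {lam : Fin n → R}
    (hv : ∀ k, A *ᵥ v k = lam k • v k) (x : Fin n → R) :
    of v * krylov A x = diagonal (fun k => v k ⬝ᵥ x) * vandermonde lam := by
  ext k j
  rw [diagonal_mul, vandermonde_apply, mul_apply]
  change v k ⬝ᵥ (A ^ (j : ℕ) *ᵥ x) = _
  rw [← (hA.pow _).mulVec_dotProduct, pow_mulVec_of_mulVec_eq_smul (hv k), smul_dotProduct,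
    smul_eq_mul, mul_comm]

theorem det_vandermonde_sq [CommRing R] (lam : Fin n → R) :
    (vandermonde lam).det ^ 2 = ∏ i, ∏ j ∈ Ioi i, (lam i - lam j) ^ 2 := by
  rw [det_vandermonde, ← prod_pow]
  exact prod_congr rfl fun i _ => by
    rw [← prod_pow]
    exact prod_congr rfl fun j _ => sub_sq_comm _ _

end Matrix

/-- Rows are indexed from the top, so `b i` is the paper's `b_{n-1-i}`, whence the exponent
`2 * (n - 1 - i)`. -/
theorem stmt_4_general (n : ℕ) (hn : 0 < n) (a : Fin n → ℝ) (b : ℕ → ℝ)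
    (T : Matrix (Fin n) (Fin n) ℝ)
    (hT : ∀ i j : Fin n, T i j =
      if (i : ℕ) = j then a i
      else if (i : ℕ) + 1 = j then b i
      else if (j : ℕ) + 1 = i then b j
      else 0)
    (lam : Fin n → ℝ) (hord : StrictAnti lam)
    (q : Fin n → ℝ) (hq : ∀ k, 0 < q k)
    (hev : ∀ k, ∃ v : Fin n → ℝ,
      (∑ i, v i ^ 2 = 1) ∧ T.mulVec v = lam k • v ∧ v ⟨0, hn⟩ = q k) :
    ∏ i, ∏ j ∈ Ioi i, (lam i - lam j) ^ 2
      = (∏ i ∈ range (n - 1), b i ^ (2 * (n - 1 - i))) / ∏ i, q i ^ 2 := by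
  have : NeZero n := ⟨hn.ne'⟩
  choose v hnorm heig hfirst using hev
  obtain rfl : T = tridiagonal a b := ext hT
  have hsymm := tridiagonal_isSymm a b
  have hP : of v * (of v)ᵀ = 1 :=
    hsymm.mul_transpose_eq_one_of_eigenvectors hord.injective heig fun k => by
      simpa [dotProduct, sq] using hnorm k
  have hdot : (fun k => v k ⬝ᵥ Pi.single 0 1) = q :=
    funext fun k => (dotProduct_single_one _ _).trans (hfirst k)
  have key := congrArg (fun M => M.det ^ 2)
    (hsymm.mul_krylov_eq_diagonal_mul_vandermonde heig (Pi.single 0 1))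
  simp only [det_mul, mul_pow, det_sq_eq_one_of_mul_transpose_eq_one hP, one_mul, hdot,
    det_diagonal, det_krylov_tridiagonal, det_vandermonde_sq] at key
  rw [eq_div_iff (prod_ne_zero_iff.mpr fun k _ => (pow_pos (hq k) 2).ne'), mul_comm, prod_pow,
    ← key, ← prod_pow]
  exact prod_congr rfl fun i _ => by rw [← pow_mul, mul_comm]

/-- For a real symmetric tridiagonal `n×n` matrix `T` with positive
off-diagonal entries, distinct eigenvalues `λ₁ > ⋯ > λₙ` and `q k > 0` the
first component of the normalized eigenvector for `λ k`, one has
`∏_{i<j}(λ_i - λ_j)² = ∏ b_i^{2i} / ∏ q_i²`.  Rows/columns are indexed from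
the top, so the off-diagonal entry `b i` (`i = 0,…,n-2`, from the top) is the
paper's `b_{n-1-i}`, whence the exponent `2*(n-1-i)`. -/
theorem stmt_4 (n : ℕ) (hn : 0 < n) (a : Fin n → ℝ) (b : ℕ → ℝ)
    (hb : ∀ i, i < n - 1 → 0 < b i)
    (T : Matrix (Fin n) (Fin n) ℝ)
    (hT : ∀ i j : Fin n, T i j =
      if (i : ℕ) = j then a i
      else if (i : ℕ) + 1 = j then b i
      else if (j : ℕ) + 1 = i then b j
      else 0)
    (lam : Fin n → ℝ) (hord : StrictAnti lam)
    (q : Fin n → ℝ) (hq : ∀ k, 0 < q k)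
    (hev : ∀ k, ∃ v : Fin n → ℝ,
      (∑ i, v i ^ 2 = 1) ∧ T.mulVec v = lam k • v ∧ v ⟨0, hn⟩ = q k) :
    ∏ i, ∏ j ∈ Ioi i, (lam i - lam j) ^ 2
      = (∏ i ∈ range (n - 1), b i ^ (2 * (n - 1 - i))) / ∏ i, q i ^ 2 :=
  stmt_4_general n hn a b T hT lam hord q hq hev
end

section
/- Characteristic polynomials χ_k(λ) of the leading k×k principal submatrices of the unitary Hessenberg matrix H(α₀,…,α_{n-1}) satisfy the Szegő-type coupled recurrence χ_k(λ) = λ χ_{k-1}(λ) - conj(α_{k-1}) χ̃_{k-1}(λ) and χ̃_k(λ) = χ̃_{k-1}(λ) - λ α_{k-1} χ_{k-1}(λ), with χ₀ = χ̃₀ = 1, where χ̃_k(λ) = λ^k conj(χ_k)(1/λ) (the reversed conjugate polynomial). -/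
open Finset

/-- Entry function of the unitary upper Hessenberg matrix parametrized by
Verblunsky coefficients `α`, with `α₋₁ = -1`, `ρ j = √(1-|α j|²)`. -/
noncomputable def hessEntry (α : ℕ → ℂ) (i j : ℕ) : ℂ :=
  let A : ℕ → ℂ := fun i => if i = 0 then -1 else α (i - 1)
  let ρ : ℕ → ℂ := fun j => (Real.sqrt (1 - ‖α j‖ ^ 2) : ℝ)
  if i = j then -A i * starRingEnd ℂ (α i)
  else if j + 1 = i then ρ j
  else if i < j then -A i * starRingEnd ℂ (α j) * ∏ l ∈ Ico i j, ρ l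
  else 0

/-- Characteristic polynomial `χ_k(λ) = det(λ I_k - H_k)` of the top-left
`k×k` block of the Hessenberg matrix. -/
noncomputable def hessChar (α : ℕ → ℂ) (k : ℕ) (lam : ℂ) : ℂ :=
  (lam • (1 : Matrix (Fin k) (Fin k) ℂ)
    - Matrix.of fun i j : Fin k => hessEntry α i j).det

/-- The reversed conjugate polynomial `χ̃_k(λ) = λ^k conj(χ_k)(1/λ)`, where
`conj(χ_k)` is the polynomial with conjugated coefficients, i.e.
`χ̃_k(λ) = λ^k · conj (χ_k ((conj λ)⁻¹))` for `λ ≠ 0`. -/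
noncomputable def hessCharTilde (α : ℕ → ℂ) (k : ℕ) (lam : ℂ) : ℂ :=
  lam ^ k * starRingEnd ℂ (hessChar α k ((starRingEnd ℂ lam)⁻¹))

/-!
On and above the diagonal, column `k` of `H` is `-conj α_k` times the vector
`u_k(i) = α_{i-1} ∏_{i ≤ l < k} ρ_l`, and `u_{k+1} = ρ_k u_k` on rows `≤ k`. Hence expanding
`χ_{k+1} = det(λ - H_{k+1})` linearly in its last column gives `χ_{k+1} = λ χ_k + conj α_k G_k`,
where `G_k` is `det(λ - H_{k+1})` with last column replaced by `u_k`, and expanding `G_{k+1}` along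
its (Hessenberg) last row gives `G_{k+1} = α_k χ_{k+1} + ρ_k² G_k`. For `λ ≠ 0` the reversed
polynomial is `χ̃_k(λ) = det(I - λ conj H_k)`, and the same two expansions apply to it with a
bordered determinant `F_k`. Since `ρ_k² = 1 - |α_k|²`, induction on `k` gives `G_k = -χ̃_k` and
`F_k = -χ_k`, which turns the two column expansions into the Szegő recurrence.
-/

namespace Matrix

variable {R : Type*} [CommRing R]

theorem det_updateCol_last_single {k : ℕ} (A : Matrix (Fin (k + 1)) (Fin (k + 1)) R) :
    (A.updateCol (Fin.last k) (Pi.single (Fin.last k) 1)).det =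
      (A.submatrix Fin.castSucc Fin.castSucc).det := by
  rw [det_succ_column _ (Fin.last k), Fintype.sum_eq_single (Fin.last k)]
  · simp only [updateCol_self, Pi.single_eq_same, Fin.succAbove_last]
    rw [Even.neg_one_pow ⟨(Fin.last k : ℕ), rfl⟩, mul_one, one_mul]
    congr 1
    ext i j
    exact updateCol_ne (Fin.castSucc_lt_last j).ne
  · intro i hi
    simp [hi]

theorem det_succ_row_last_of_eq_zero {k : ℕ} (A : Matrix (Fin (k + 2)) (Fin (k + 2)) R)
    (h : ∀ j : Fin k, A (Fin.last (k + 1)) j.castSucc.castSucc = 0) :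
    A.det = A (Fin.last (k + 1)) (Fin.last (k + 1)) * (A.submatrix Fin.castSucc Fin.castSucc).det
      - A (Fin.last (k + 1)) (Fin.last k).castSucc *
        (A.submatrix Fin.castSucc (Fin.last k).castSucc.succAbove).det := by
  rw [det_succ_row A (Fin.last (k + 1)), Fin.sum_univ_castSucc, Fin.sum_univ_castSucc,
    Finset.sum_eq_zero fun j _ => by rw [h j, mul_zero, zero_mul], Fin.succAbove_last]
  have hodd : (-1 : R) ^ ((Fin.last (k + 1) : ℕ) + ((Fin.last k).castSucc : ℕ)) = -1 :=
    Odd.neg_one_pow ⟨k, by simp; ring⟩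
  have heven : (-1 : R) ^ ((Fin.last (k + 1) : ℕ) + (Fin.last (k + 1) : ℕ)) = 1 :=
    Even.neg_one_pow ⟨k + 1, rfl⟩
  rw [hodd, heven]
  ring

end Matrix

section Minors

variable {R : Type*} [CommRing R] (f : ℕ → ℕ → R)

def leadingMinor (k : ℕ) : R := (Matrix.of fun i j : Fin k => f i j).det

def borderedMinor (v : ℕ → R) (k : ℕ) : R :=
  ((Matrix.of fun i j : Fin (k + 1) => f i j).updateCol (Fin.last k) fun i => v i).det

@[simp] theorem leadingMinor_zero : leadingMinor f 0 = 1 := Matrix.det_fin_zero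

@[simp] theorem borderedMinor_zero (v : ℕ → R) : borderedMinor f v 0 = v 0 := by
  simp [borderedMinor]

theorem leadingMinor_succ {k : ℕ} {c d : R} {v : ℕ → R}
    (hcol : ∀ i < k, f i k = c * v i) (hdiag : f k k = d + c * v k) :
    leadingMinor f (k + 1) = d * leadingMinor f k + c * borderedMinor f v k := by
  have hlast : (Matrix.of fun i j : Fin (k + 1) => f i j) =
      (Matrix.of fun i j : Fin (k + 1) => f i j).updateCol (Fin.last k)
        (d • Pi.single (Fin.last k) 1 + c • fun i : Fin (k + 1) => v i) := by
    ext i j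
    rcases Fin.eq_castSucc_or_eq_last j with ⟨j, rfl⟩ | rfl
    · rw [Matrix.updateCol_ne (Fin.castSucc_lt_last j).ne]
    · rcases Fin.eq_castSucc_or_eq_last i with ⟨i, rfl⟩ | rfl
      · simp [hcol i i.isLt, (Fin.castSucc_lt_last i).ne]
      · simp [hdiag]
  rw [leadingMinor, hlast, Matrix.det_updateCol_add, Matrix.det_updateCol_smul,
    Matrix.det_updateCol_smul, Matrix.det_updateCol_last_single]
  rfl

theorem borderedMinor_succ {k : ℕ} {r s : R} {v w : ℕ → R}
    (hlow : ∀ j < k, f (k + 1) j = 0) (hsub : f (k + 1) k = -s)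
    (hw : ∀ i ≤ k, w i = r * v i) :
    borderedMinor f w (k + 1) =
      w (k + 1) * leadingMinor f (k + 1) + s * r * borderedMinor f v k := by
  set B := (Matrix.of fun i j : Fin (k + 2) => f i j).updateCol (Fin.last (k + 1)) fun i => w i
  have htop : B.submatrix Fin.castSucc Fin.castSucc = Matrix.of fun i j : Fin (k + 1) => f i j := by
    ext i j
    simp [B, (Fin.castSucc_lt_last j).ne]
  have hminor : B.submatrix Fin.castSucc (Fin.last k).castSucc.succAbove =
      (Matrix.of fun i j : Fin (k + 1) => f i j).updateCol (Fin.last k)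
        (r • fun i : Fin (k + 1) => v i) := by
    ext i j
    rcases Fin.eq_castSucc_or_eq_last j with ⟨j, rfl⟩ | rfl
    · simp [B, Fin.succAbove_castSucc_of_lt _ _ (Fin.castSucc_lt_last j),
        (Fin.castSucc_lt_last j).ne]
    · simp [B, hw i (Fin.is_le i)]
  rw [borderedMinor, Matrix.det_succ_row_last_of_eq_zero B fun j => by simp [B, hlow j j.isLt],
    htop, hminor, Matrix.det_updateCol_smul, leadingMinor, borderedMinor]
  simp only [B, Matrix.updateCol_self, Matrix.updateCol_ne (Fin.castSucc_ne_last _),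
    Matrix.of_apply, Fin.val_last, Fin.val_castSucc, hsub]
  ring

end Minors

open ComplexConjugate

section UnitaryHessenberg

variable (α : ℕ → ℂ) (lam : ℂ)

def hessShiftedAlpha (i : ℕ) : ℂ := if i = 0 then -1 else α (i - 1)

noncomputable def hessRho (j : ℕ) : ℂ := (Real.sqrt (1 - ‖α j‖ ^ 2) : ℝ)

noncomputable def hessColumn (k i : ℕ) : ℂ :=
  hessShiftedAlpha α i * ∏ l ∈ Ico i k, hessRho α l

theorem hessEntry_of_le {i k : ℕ} (h : i ≤ k) :
    hessEntry α i k = -conj (α k) * hessColumn α k i := by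
  rcases h.lt_or_eq with h | rfl
  · simp only [hessEntry, if_neg h.ne, if_neg (by omega : ¬k + 1 = i), if_pos h, hessColumn,
      hessShiftedAlpha, hessRho]
    ring
  · simp [hessEntry, hessColumn, hessShiftedAlpha, mul_comm]

theorem hessEntry_succ_self (j : ℕ) : hessEntry α (j + 1) j = hessRho α j := by
  simp [hessEntry, hessRho]

theorem hessEntry_of_succ_lt {i j : ℕ} (h : j + 1 < i) : hessEntry α i j = 0 := by
  simp only [hessEntry, if_neg (by omega : ¬i = j), if_neg (by omega : ¬j + 1 = i),
    if_neg (by omega : ¬i < j)]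

@[simp] theorem conj_hessRho (j : ℕ) : conj (hessRho α j) = hessRho α j :=
  Complex.conj_ofReal _

theorem hessRho_mul_self {j : ℕ} (h : ‖α j‖ ≤ 1) :
    hessRho α j * hessRho α j = 1 - α j * conj (α j) := by
  have h0 : (0 : ℝ) ≤ 1 - ‖α j‖ ^ 2 := by nlinarith [norm_nonneg (α j)]
  rw [hessRho, ← Complex.ofReal_mul, Real.mul_self_sqrt h0, Complex.mul_conj,
    Complex.normSq_eq_norm_sq]
  push_cast
  ring

theorem hessColumn_succ {k i : ℕ} (h : i ≤ k) :
    hessColumn α (k + 1) i = hessRho α k * hessColumn α k i := by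
  rw [hessColumn, hessColumn, prod_Ico_succ_top h]
  ring

theorem hessColumn_self (k : ℕ) : hessColumn α (k + 1) (k + 1) = α k := by
  simp [hessColumn, hessShiftedAlpha]

noncomputable def hessCharEntry (i j : ℕ) : ℂ := (if i = j then lam else 0) - hessEntry α i j

noncomputable def hessRevCharEntry (i j : ℕ) : ℂ :=
  (if i = j then 1 else 0) - lam * conj (hessEntry α i j)

theorem hessChar_eq_leadingMinor (k : ℕ) :
    hessChar α k lam = leadingMinor (hessCharEntry α lam) k := by
  rw [hessChar, leadingMinor]
  congr 1
  ext i j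
  simp [hessCharEntry, Matrix.one_apply, Fin.ext_iff]

theorem hessCharTilde_eq_leadingMinor (hlam : lam ≠ 0) (k : ℕ) :
    hessCharTilde α k lam = leadingMinor (hessRevCharEntry α lam) k := by
  have hcard : lam ^ k = lam ^ Fintype.card (Fin k) := by rw [Fintype.card_fin]
  rw [hessCharTilde, hessChar, RingHom.map_det, leadingMinor, hcard, ← Matrix.det_smul]
  congr 1
  ext i j
  simp [hessRevCharEntry, Matrix.one_apply, Fin.ext_iff, mul_sub, apply_ite (starRingEnd ℂ), hlam]

theorem leadingMinor_hessCharEntry_succ (k : ℕ) :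
    leadingMinor (hessCharEntry α lam) (k + 1) =
      lam * leadingMinor (hessCharEntry α lam) k +
        conj (α k) * borderedMinor (hessCharEntry α lam) (hessColumn α k) k :=
  leadingMinor_succ _
    (fun i hi => by simp [hessCharEntry, hessEntry_of_le α hi.le, hi.ne])
    (by simp [hessCharEntry, hessEntry_of_le α le_rfl])

theorem leadingMinor_hessRevCharEntry_succ (k : ℕ) :
    leadingMinor (hessRevCharEntry α lam) (k + 1) =
      leadingMinor (hessRevCharEntry α lam) k +
        lam * α k *
          borderedMinor (hessRevCharEntry α lam) (fun i => conj (hessColumn α k i)) k := by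
  rw [leadingMinor_succ _ (c := lam * α k) (d := 1), one_mul]
  · intro i hi
    simp only [hessRevCharEntry, if_neg hi.ne, hessEntry_of_le α hi.le, map_mul, map_neg,
      Complex.conj_conj]
    ring
  · simp only [hessRevCharEntry, if_true, hessEntry_of_le α le_rfl, map_mul, map_neg,
      Complex.conj_conj]
    ring

theorem borderedMinor_hessCharEntry_succ (k : ℕ) :
    borderedMinor (hessCharEntry α lam) (hessColumn α (k + 1)) (k + 1) =
      α k * leadingMinor (hessCharEntry α lam) (k + 1) +
        hessRho α k * hessRho α k * borderedMinor (hessCharEntry α lam) (hessColumn α k) k := by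
  have hlow : ∀ j < k, hessCharEntry α lam (k + 1) j = 0 := fun j hj => by
    rw [hessCharEntry, if_neg (by omega), hessEntry_of_succ_lt α (by omega), sub_zero]
  have hsub : hessCharEntry α lam (k + 1) k = -hessRho α k := by
    simp [hessCharEntry, hessEntry_succ_self]
  rw [borderedMinor_succ _ hlow hsub fun i hi => hessColumn_succ α hi, hessColumn_self]

theorem borderedMinor_hessRevCharEntry_succ (k : ℕ) :
    borderedMinor (hessRevCharEntry α lam) (fun i => conj (hessColumn α (k + 1) i)) (k + 1) =
      conj (α k) * leadingMinor (hessRevCharEntry α lam) (k + 1) +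
        lam * hessRho α k * hessRho α k *
          borderedMinor (hessRevCharEntry α lam) (fun i => conj (hessColumn α k i)) k := by
  have hlow : ∀ j < k, hessRevCharEntry α lam (k + 1) j = 0 := fun j hj => by
    rw [hessRevCharEntry, if_neg (by omega), hessEntry_of_succ_lt α (by omega), map_zero,
      mul_zero, sub_zero]
  have hsub : hessRevCharEntry α lam (k + 1) k = -(lam * hessRho α k) := by
    simp [hessRevCharEntry, hessEntry_succ_self]
  have hcol : ∀ i ≤ k, conj (hessColumn α (k + 1) i) = hessRho α k * conj (hessColumn α k i) :=
    fun i hi => by rw [hessColumn_succ α hi, map_mul, conj_hessRho]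
  rw [borderedMinor_succ _ hlow hsub hcol, hessColumn_self]

theorem borderedMinors_eq_neg_leadingMinors {k : ℕ} (h : ∀ l < k, ‖α l‖ ≤ 1) :
    borderedMinor (hessCharEntry α lam) (hessColumn α k) k =
        -leadingMinor (hessRevCharEntry α lam) k ∧
      borderedMinor (hessRevCharEntry α lam) (fun i => conj (hessColumn α k i)) k =
        -leadingMinor (hessCharEntry α lam) k := by
  induction k with
  | zero => simp [hessColumn, hessShiftedAlpha]
  | succ k ih =>
    obtain ⟨hG, hF⟩ := ih fun l hl => h l (by omega)
    have hρ := hessRho_mul_self α (h k k.lt_succ_self)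
    constructor
    · rw [borderedMinor_hessCharEntry_succ, leadingMinor_hessCharEntry_succ,
        leadingMinor_hessRevCharEntry_succ, hG, hF]
      linear_combination -leadingMinor (hessRevCharEntry α lam) k * hρ
    · rw [borderedMinor_hessRevCharEntry_succ, leadingMinor_hessCharEntry_succ,
        leadingMinor_hessRevCharEntry_succ, hG, hF]
      linear_combination -lam * leadingMinor (hessCharEntry α lam) k * hρ

end UnitaryHessenberg

theorem stmt_9_general (n : ℕ) (α : ℕ → ℂ)
    (hα : ∀ j, j < n - 1 → ‖α j‖ < 1) :
    (∀ lam : ℂ, hessChar α 0 lam = 1 ∧ hessCharTilde α 0 lam = 1) ∧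
    ∀ k, k < n → ∀ lam : ℂ, lam ≠ 0 →
      hessChar α (k + 1) lam
          = lam * hessChar α k lam
            - starRingEnd ℂ (α k) * hessCharTilde α k lam ∧
      hessCharTilde α (k + 1) lam
          = hessCharTilde α k lam - lam * α k * hessChar α k lam := by
  refine ⟨fun lam => ⟨?_, ?_⟩, fun k hk lam hlam => ?_⟩
  · simp [hessChar_eq_leadingMinor]
  · simp [hessCharTilde, hessChar_eq_leadingMinor]
  obtain ⟨hG, hF⟩ :=
    borderedMinors_eq_neg_leadingMinors α lam (k := k) fun l hl => (hα l (by omega)).le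
  simp only [hessChar_eq_leadingMinor, hessCharTilde_eq_leadingMinor α lam hlam,
    leadingMinor_hessCharEntry_succ, leadingMinor_hessRevCharEntry_succ, hG, hF]
  constructor <;> ring

/-- The Szegő-type coupled recurrence for the characteristic polynomials of
the leading principal blocks of the unitary Hessenberg matrix
`H(α₀,…,α_{n-1})`:
`χ_k(λ) = λ χ_{k-1}(λ) - conj(α_{k-1}) χ̃_{k-1}(λ)` and
`χ̃_k(λ) = χ̃_{k-1}(λ) - λ α_{k-1} χ_{k-1}(λ)`, with `χ₀ = χ̃₀ = 1`. -/
theorem stmt_9 (n : ℕ) (α : ℕ → ℂ)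
    (hα : ∀ j, j < n - 1 → ‖α j‖ < 1)
    (hlast : ‖α (n - 1)‖ ≤ 1) :
    (∀ lam : ℂ, hessChar α 0 lam = 1 ∧ hessCharTilde α 0 lam = 1) ∧
    ∀ k, k < n → ∀ lam : ℂ, lam ≠ 0 →
      hessChar α (k + 1) lam
          = lam * hessChar α k lam
            - starRingEnd ℂ (α k) * hessCharTilde α k lam ∧
      hessCharTilde α (k + 1) lam
          = hessCharTilde α k lam - lam * α k * hessChar α k lam :=
  stmt_9_general n α hα
end

section
/- For a 2n×2n real orthogonal Hessenberg matrix of determinant +1 parametrized by real α₀,…,α_{2n-2} with |α_k| < 1 (and α_{2n-1} = -1), with eigenvalues e^{±iθ_j} (j = 1,…,n), one has ∏_{j=1}^n |1 - λ_j|² = 2 ∏_{k=0}^{2n-2} (1 - α_k) and ∏_{j=1}^n |1 + λ_j|² = 2 ∏_{k=0}^{2n-2} (1 + (-1)^k α_k), where λ_j = e^{iθ_j}. -/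
open Finset Complex

/-- The real orthogonal upper Hessenberg matrix parametrized by real
Verblunsky coefficients `α`, with `α₋₁ = -1`, `ρ j = √(1-α j²)`. -/
noncomputable def hessenbergO (n : ℕ) (α : ℕ → ℝ) : Matrix (Fin n) (Fin n) ℝ :=
  let A : ℕ → ℝ := fun i => if i = 0 then -1 else α (i - 1)
  let ρ : ℕ → ℝ := fun j => Real.sqrt (1 - α j ^ 2)
  Matrix.of fun i j =>
    if (i : ℕ) = (j : ℕ) then -A i * α i
    else if (j : ℕ) + 1 = (i : ℕ) then ρ j
    else if (i : ℕ) < (j : ℕ) then -A i * α j * ∏ l ∈ Ico (i : ℕ) (j : ℕ), ρ l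
    else 0

/-!
Gaussian elimination on `z • 1 - H` needs no pivoting: `z • 1 - H = L U` with `L` unit lower
bidiagonal and `U` upper triangular, where row `i` of `U` is row `i` of `z • 1 - H` with the
factor `α_{i-1}` replaced by `c i`, and the pivots are `d i = z + α i * c i`, with `c 0 = -1` and
`c (i+1) d i = α i d i + c i ρ i ²`. For `z = ε = ±1` the recursion is solved by `c i = -ε ^ i`,
so `det (ε • 1 - H) = ∏ (ε - ε ^ i α i)`, whose last factor (`α (2n-1) = -1`) is `2ε`.
For real `x`, `det (x • 1 - H) = ∏ |x - λ_j|²` because the eigenvalues come in conjugate pairs.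
-/
section LU

variable {N : ℕ} (α c d : ℕ → ℝ)

noncomputable def hessenbergLower (N : ℕ) : Matrix (Fin N) (Fin N) ℝ :=
  Matrix.of fun i j =>
    if (i : ℕ) = j then 1 else if (j : ℕ) + 1 = i then -√(1 - α j ^ 2) / d j else 0

noncomputable def hessenbergUpper (N : ℕ) : Matrix (Fin N) (Fin N) ℝ :=
  Matrix.of fun i j =>
    if (i : ℕ) = j then d i
    else if (i : ℕ) < j then c i * α j * ∏ l ∈ Ico (i : ℕ) j, √(1 - α l ^ 2) else 0

lemma hessenbergLower_isLowerTriangular : (hessenbergLower α d N).IsLowerTriangular := by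
  intro i j (hij : (i : ℕ) < j)
  simp only [hessenbergLower, Matrix.of_apply]
  rw [if_neg (by omega), if_neg (by omega)]

lemma hessenbergUpper_isUpperTriangular : (hessenbergUpper α c d N).IsUpperTriangular := by
  intro i j (hij : (j : ℕ) < i)
  simp only [hessenbergUpper, Matrix.of_apply]
  rw [if_neg (by omega), if_neg (by omega)]

lemma hessenbergLower_mul_apply_of_val_eq_zero (M : Matrix (Fin N) (Fin N) ℝ) {i : Fin N}
    (hi : (i : ℕ) = 0) (j : Fin N) : (hessenbergLower α d N * M) i j = M i j := by
  rw [Matrix.mul_apply, Fintype.sum_eq_single i fun k hk => ?_]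
  · simp [hessenbergLower]
  · simp only [hessenbergLower, Matrix.of_apply]
    rw [if_neg (by omega), if_neg (by omega), zero_mul]

lemma hessenbergLower_mul_apply_of_val_eq_succ (M : Matrix (Fin N) (Fin N) ℝ) {i k : Fin N}
    (hik : (i : ℕ) = k + 1) (j : Fin N) :
    (hessenbergLower α d N * M) i j = -√(1 - α k ^ 2) / d k * M k j + M i j := by
  have hki : k ≠ i := fun h => by rw [h] at hik; omega
  rw [Matrix.mul_apply, Fintype.sum_eq_add k i hki fun l hl => ?_]
  · simp only [hessenbergLower, Matrix.of_apply]
    rw [if_neg (by omega), if_pos hik.symm, if_true, one_mul]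
  · have h₁ : (l : ℕ) ≠ k := fun h => hl.1 (Fin.ext h)
    have h₂ : (i : ℕ) ≠ l := fun h => hl.2 (Fin.ext h.symm)
    simp only [hessenbergLower, Matrix.of_apply]
    rw [if_neg h₂, if_neg (by omega), zero_mul]

theorem smul_one_sub_hessenbergO_eq_mul (z : ℝ)
    (hα : ∀ i, i + 1 < N → α i ^ 2 ≤ 1)
    (hd : ∀ i, i + 1 < N → d i ≠ 0)
    (hdz : ∀ i < N, d i = z + α i * c i)
    (hc0 : c 0 = -1)
    (hcs : ∀ i, i + 1 < N → c (i + 1) * d i = α i * d i + c i * (1 - α i ^ 2)) :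
    z • 1 - hessenbergO N α = hessenbergLower α d N * hessenbergUpper α c d N := by
  ext i j
  obtain hi | ⟨m, hm⟩ : (i : ℕ) = 0 ∨ ∃ m, (i : ℕ) = m + 1 :=
    (Nat.eq_zero_or_eq_succ_pred _).imp id fun h => ⟨_, h⟩
  · have hd0 := hdz 0 (hi ▸ i.isLt)
    rw [hessenbergLower_mul_apply_of_val_eq_zero α d _ hi]
    simp only [hessenbergO, hessenbergUpper, Matrix.sub_apply, Matrix.smul_apply,
      Matrix.one_apply, Fin.ext_iff, Matrix.of_apply, smul_eq_mul, hi, hd0, hc0]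
    split_ifs <;> first | contradiction | omega | ring
  · have hmN : m + 1 < N := hm ▸ i.isLt
    have hρ : √(1 - α m ^ 2) ^ 2 = 1 - α m ^ 2 := Real.sq_sqrt (by linarith [hα m hmN])
    have hdm := hd m hmN
    have hcm := hcs m hmN
    rw [hessenbergLower_mul_apply_of_val_eq_succ α d _ (k := ⟨m, by omega⟩) hm]
    simp only [hessenbergO, hessenbergUpper, Matrix.sub_apply, Matrix.smul_apply,
      Matrix.one_apply, Fin.ext_iff, Matrix.of_apply, smul_eq_mul, hm, Nat.add_sub_cancel,
      Nat.add_eq_zero_iff, one_ne_zero, and_false, if_false]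
    rcases lt_trichotomy (j : ℕ) (m + 1) with hj | hj | hj
    · obtain hjm | rfl := Nat.lt_succ_iff_lt_or_eq.mp hj
      · split_ifs <;> first | omega | simp
      · split_ifs <;> first | omega | simp [hdm]
    · have hP : ∏ l ∈ Ico m j, √(1 - α l ^ 2) = √(1 - α m ^ 2) := by
        rw [hj, Nat.Ico_succ_singleton, prod_singleton]
      split_ifs <;> try omega
      rw [hP, hdz (m + 1) hmN, hj]
      field_simp
      linear_combination α (m + 1) * (c m * hρ - hcm)
    · split_ifs <;> try omega
      rw [prod_eq_prod_Ico_succ_bot (show m < j by omega)]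
      field_simp
      linear_combination (α j * ∏ l ∈ Ico (m + 1) j, √(1 - α l ^ 2)) * (c m * hρ - hcm)

theorem det_smul_one_sub_hessenbergO (z : ℝ)
    (hα : ∀ i, i + 1 < N → α i ^ 2 ≤ 1)
    (hd : ∀ i, i + 1 < N → d i ≠ 0)
    (hdz : ∀ i < N, d i = z + α i * c i)
    (hc0 : c 0 = -1)
    (hcs : ∀ i, i + 1 < N → c (i + 1) * d i = α i * d i + c i * (1 - α i ^ 2)) :
    (z • 1 - hessenbergO N α).det = ∏ i ∈ range N, d i := by
  rw [smul_one_sub_hessenbergO_eq_mul α c d z hα hd hdz hc0 hcs, Matrix.det_mul,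
    Matrix.det_of_isLowerTriangular _ (hessenbergLower_isLowerTriangular α d),
    Matrix.det_of_isUpperTriangular (hessenbergUpper_isUpperTriangular α c d),
    ← Fin.prod_univ_eq_prod_range]
  simp [hessenbergLower, hessenbergUpper]

theorem det_smul_one_sub_hessenbergO_of_sq_eq_one {ε : ℝ} (hε : ε ^ 2 = 1)
    (hα : ∀ i, i + 1 < N → |α i| < 1) :
    (ε • 1 - hessenbergO N α).det = ∏ i ∈ range N, (ε - ε ^ i * α i) := by
  have hεi (i : ℕ) : (ε ^ i) ^ 2 = 1 := by rw [← pow_mul, mul_comm, pow_mul, hε, one_pow]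
  have hα' (i : ℕ) (hi : i + 1 < N) : α i ^ 2 < 1 := (sq_lt_one_iff_abs_lt_one _).mpr (hα i hi)
  refine det_smul_one_sub_hessenbergO α (fun i => -ε ^ i) _ ε (fun i hi => (hα' i hi).le)
    (fun i hi h => ?_) (fun i _ => by ring) (by simp) (fun i _ => ?_)
  · have h2 := congrArg (· ^ 2) (sub_eq_zero.mp h)
    simp only [mul_pow, hε, hεi, one_mul] at h2
    linarith [hα' i hi]
  · linear_combination (-ε ^ i) * hε + ε * α i * hεi i

end LU

section EvenDimension
variable {n : ℕ} {α : ℕ → ℝ}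

lemma det_one_sub_hessenbergO (hn : 0 < n) (hα : ∀ k, k ≤ 2 * n - 2 → |α k| < 1)
    (hlast : α (2 * n - 1) = -1) :
    (1 - hessenbergO (2 * n) α).det = 2 * ∏ k ∈ range (2 * n - 1), (1 - α k) := by
  have h := det_smul_one_sub_hessenbergO_of_sq_eq_one (N := 2 * n) α (one_pow 2)
    fun i hi => hα i (by omega)
  conv_rhs at h => rw [show 2 * n = 2 * n - 1 + 1 by omega, prod_range_succ]
  rw [one_smul] at h
  rw [h, hlast]
  simp only [one_pow, one_mul]
  ring

lemma det_neg_one_sub_hessenbergO (hn : 0 < n) (hα : ∀ k, k ≤ 2 * n - 2 → |α k| < 1)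
    (hlast : α (2 * n - 1) = -1) :
    (-1 - hessenbergO (2 * n) α).det = 2 * ∏ k ∈ range (2 * n - 1), (1 + (-1) ^ k * α k) := by
  have h := det_smul_one_sub_hessenbergO_of_sq_eq_one (N := 2 * n) α (neg_one_sq)
    fun i hi => hα i (by omega)
  have hodd : Odd (2 * n - 1) := ⟨n - 1, by omega⟩
  have hfac (k : ℕ) : -1 - (-1) ^ k * α k = -(1 + (-1) ^ k * α k) := by ring
  conv_rhs at h => rw [show 2 * n = 2 * n - 1 + 1 by omega, prod_range_succ]
  rw [neg_smul, one_smul] at h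
  rw [h]
  simp only [hfac, prod_neg, hodd.neg_one_pow, hlast, card_range]
  ring

end EvenDimension

lemma prod_norm_sub_exp_sq_eq_det {N m : ℕ} (A : Matrix (Fin N) (Fin N) ℝ) (θ : Fin m → ℝ)
    (hA : ∀ z : ℂ, (z • (1 : Matrix (Fin N) (Fin N) ℂ) - A.map ofReal).det
      = ∏ j, ((z - exp (θ j * I)) * (z - exp (-θ j * I)))) (x : ℝ) :
    ∏ j, ‖(x : ℂ) - exp (θ j * I)‖ ^ 2 = (x • 1 - A).det := by
  have hconj (t : ℝ) : (starRingEnd ℂ) ((x : ℂ) - exp (t * I)) = x - exp (-t * I) := by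
    rw [map_sub, conj_ofReal, ← exp_conj, map_mul, conj_ofReal, conj_I, mul_neg, neg_mul]
  apply ofReal_injective
  have hmap : (x • 1 - A).map ofRealHom = (x : ℂ) • 1 - A.map ofReal := by
    ext i j
    simp [Matrix.one_apply, apply_ite]
  rw [ofReal_prod, ← ofRealHom_eq_coe ((x • 1 - A).det), RingHom.map_det,
    RingHom.mapMatrix_apply, hmap, hA]
  refine prod_congr rfl fun j _ => ?_
  rw [ofReal_pow, ← mul_conj', hconj]

/-- For a `2n×2n` real orthogonal Hessenberg matrix of determinant `+1`
parametrized by real `α₀,…,α_{2n-2}` with `|α_k| < 1` (and `α_{2n-1} = -1`),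
whose spectrum consists of the conjugate pairs `e^{±iθ_j}` (`j = 1,…,n`), one
has `∏_j |1-λ_j|² = 2 ∏_{k=0}^{2n-2} (1-α_k)` and
`∏_j |1+λ_j|² = 2 ∏_{k=0}^{2n-2} (1+(-1)^k α_k)`, where `λ_j = e^{iθ_j}`. -/
theorem stmt_10 (n : ℕ) (hn : 0 < n) (α : ℕ → ℝ)
    (hα : ∀ k, k ≤ 2 * n - 2 → |α k| < 1)
    (hlast : α (2 * n - 1) = -1)
    (θ : Fin n → ℝ)
    (hspec : ∀ z : ℂ,
      (z • (1 : Matrix (Fin (2 * n)) (Fin (2 * n)) ℂ)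
          - (hessenbergO (2 * n) α).map (Complex.ofReal)).det
        = ∏ j, ((z - Complex.exp (θ j * I)) * (z - Complex.exp (-θ j * I)))) :
    (∏ j, ‖1 - Complex.exp (θ j * I)‖ ^ 2
        = 2 * ∏ k ∈ range (2 * n - 1), (1 - α k)) ∧
    (∏ j, ‖1 + Complex.exp (θ j * I)‖ ^ 2
        = 2 * ∏ k ∈ range (2 * n - 1), (1 + (-1) ^ k * α k)) := by
  have hnorm := prod_norm_sub_exp_sq_eq_det _ θ hspec
  constructor
  · simpa [det_one_sub_hessenbergO hn hα hlast] using hnorm 1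
  · have hneg (w : ℂ) : ‖((-1 : ℝ) : ℂ) - w‖ = ‖1 + w‖ := by
      rw [← norm_neg]; push_cast; ring_nf
    simpa only [hneg, neg_smul, one_smul, det_neg_one_sub_hessenbergO hn hα hlast] using hnorm (-1)
end

section
/- Let U be an n×n unitary matrix with distinct eigenvalues e^{iθ_1},…,e^{iθ_n} and unitary eigenvector matrix V = [v_{jk}]. For t on the unit circle, the eigenvalues of Ũ = (I_n - (1-t)e₁e₁ᵀ)U are exactly the zeros of the rational function C_n(λ) = 1 + (t-1) ∑_{j=1}^n e^{iθ_j}|v_{1j}|²/(e^{iθ_j} - λ). -/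
open Finset Complex

/-!
Conjugating by the eigenvector matrix turns `Ũ - λ` into `diag(e^{iθ_j} - λ)` plus the rank-one
matrix `(t - 1) (V* e₁) (e₁ᵀ U V)`, and the matrix determinant lemma evaluates its determinant as
`∏ (e^{iθ_j} - λ) · C_n(λ)`; the product is nonzero since `λ` is not an eigenvalue of `U`.
-/

namespace Matrix

variable {n K : Type*} [DecidableEq n]

theorem of_ite_mul_row_eq_add_replicateCol_mul_replicateRow [CommRing K]
    (A : Matrix n n K) (i₀ : n) (t : K) :
    (of fun i j => if i = i₀ then t * A i j else A i j) =
      A + replicateCol Unit (Pi.single i₀ (t - 1)) * replicateRow Unit (A i₀) := by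
  ext i j
  by_cases h : i = i₀
  · subst h
    simp only [of_apply, ↓reduceIte, add_apply, mul_apply, univ_unique, replicateCol_apply,
      Pi.single_eq_same, replicateRow_apply, sum_const, card_singleton, one_smul]
    ring
  · simp [Matrix.mul_apply, h]

variable [Fintype n] [Field K]

theorem det_diagonal_add_replicateCol_mul_replicateRow {d : n → K} (hd : ∀ i, d i ≠ 0)
    (u v : n → K) :
    (diagonal d + replicateCol Unit u * replicateRow Unit v).det =
      (∏ i, d i) * (1 + ∑ i, v i * u i / d i) := by
  have hfac : diagonal d + replicateCol Unit u * replicateRow Unit v =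
      diagonal d * (1 + replicateCol Unit (u / d) * replicateRow Unit v) := by
    rw [Matrix.mul_add, Matrix.mul_one, ← Matrix.mul_assoc, ← replicateCol_mulVec]
    congr 3
    ext i
    rw [mulVec_diagonal, Pi.div_apply, mul_div_cancel₀ _ (hd i)]
  rw [hfac, det_mul, det_diagonal, det_one_add_replicateCol_mul_replicateRow, dotProduct]
  simp only [Pi.div_apply, mul_div_assoc]

theorem det_add_replicateCol_mul_replicateRow_sub_smul_of_mul_eq_mul_diagonal
    {U V W : Matrix n n K} {ω : n → K} (hWV : W * V = 1) (hUV : U * V = V * diagonal ω)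
    {μ : K} (hμ : ∀ j, ω j ≠ μ) (c r : n → K) :
    (U + replicateCol Unit c * replicateRow Unit r - μ • 1).det =
      (∏ j, (ω j - μ)) * (1 + ∑ j, (r ᵥ* V) j * (W *ᵥ c) j / (ω j - μ)) := by
  have hconj : W * (U + replicateCol Unit c * replicateRow Unit r - μ • 1) * V =
      diagonal (fun j => ω j - μ) +
        replicateCol Unit (W *ᵥ c) * replicateRow Unit (r ᵥ* V) := by
    rw [Matrix.mul_sub, Matrix.mul_add, Matrix.sub_mul, Matrix.add_mul, Matrix.mul_assoc W U,
      hUV, ← Matrix.mul_assoc W V, hWV, Matrix.one_mul, Matrix.mul_smul, Matrix.mul_one,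
      Matrix.smul_mul, hWV, replicateCol_mulVec, replicateRow_vecMul, smul_one_eq_diagonal,
      add_sub_right_comm, diagonal_sub, Matrix.mul_assoc, Matrix.mul_assoc, Matrix.mul_assoc]
  have hdet : W.det * V.det = 1 := by rw [← det_mul, hWV, det_one]
  rw [← det_diagonal_add_replicateCol_mul_replicateRow (fun j => sub_ne_zero.2 (hμ j)), ← hconj,
    det_mul, det_mul, mul_comm, ← mul_assoc, mul_comm V.det, hdet, one_mul]

end Matrix

theorem stmt_11_general (n : ℕ) (hn : 0 < n)
    (U V : Matrix (Fin n) (Fin n) ℂ)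
    (hV : V ∈ Matrix.unitaryGroup (Fin n) ℂ)
    (θ : Fin n → ℝ)
    (heig : U * V = V * Matrix.diagonal fun j => Complex.exp (θ j * I))
    (t : ℂ) :
    ∀ lam : ℂ, (∀ j, lam ≠ Complex.exp (θ j * I)) →
      (((Matrix.of fun i j : Fin n =>
          if i = ⟨0, hn⟩ then t * U i j else U i j)
            - lam • (1 : Matrix (Fin n) (Fin n) ℂ)).det = 0
        ↔ 1 + (t - 1) * ∑ j, Complex.exp (θ j * I) *
            ((‖V ⟨0, hn⟩ j‖ : ℝ) : ℂ) ^ 2 /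
              (Complex.exp (θ j * I) - lam) = 0) := by
  intro lam hlam
  rw [Matrix.of_ite_mul_row_eq_add_replicateCol_mul_replicateRow,
    Matrix.det_add_replicateCol_mul_replicateRow_sub_smul_of_mul_eq_mul_diagonal
      (Matrix.mem_unitaryGroup_iff'.1 hV) heig (fun j => (hlam j).symm),
    mul_eq_zero, or_iff_right (prod_ne_zero_iff.2 fun j _ => sub_ne_zero.2 (hlam j).symm),
    ← Matrix.mul_apply_eq_vecMul, heig, Matrix.mulVec_single, mul_sum]
  congr! 3 with j
  simp only [Matrix.mul_diagonal, Pi.smul_apply, Matrix.col_apply, Matrix.star_apply,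
    MulOpposite.smul_eq_mul_unop, MulOpposite.unop_op, RCLike.star_def]
  rw [← Complex.mul_conj']
  ring

/-- Let `U` be an `n×n` unitary matrix with distinct eigenvalues `e^{iθ_j}`
and unitary eigenvector matrix `V` (so `U V = V diag(e^{iθ_j})`, columns of
`V` being the normalized eigenvectors).  For `t` on the unit circle, a
complex number `λ` not equal to any `e^{iθ_j}` is an eigenvalue of the
perturbed matrix `Ũ = (I - (1-t) e₁e₁ᵀ) U` (i.e. `U` with first row
multiplied by `t`) iff
`C_n(λ) = 1 + (t-1) ∑_j e^{iθ_j} |v_{1j}|² / (e^{iθ_j} - λ) = 0`. -/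
theorem stmt_11 (n : ℕ) (hn : 0 < n)
    (U V : Matrix (Fin n) (Fin n) ℂ)
    (hU : U ∈ Matrix.unitaryGroup (Fin n) ℂ)
    (hV : V ∈ Matrix.unitaryGroup (Fin n) ℂ)
    (θ : Fin n → ℝ)
    (hdist : Function.Injective fun j => Complex.exp (θ j * I))
    (heig : U * V = V * Matrix.diagonal fun j => Complex.exp (θ j * I))
    (t : ℂ) (ht : ‖t‖ = 1) :
    ∀ lam : ℂ, (∀ j, lam ≠ Complex.exp (θ j * I)) →
      (((Matrix.of fun i j : Fin n =>
          if i = ⟨0, hn⟩ then t * U i j else U i j)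
            - lam • (1 : Matrix (Fin n) (Fin n) ℂ)).det = 0
        ↔ 1 + (t - 1) * ∑ j, Complex.exp (θ j * I) *
            ((‖V ⟨0, hn⟩ j‖ : ℝ) : ℂ) ^ 2 /
              (Complex.exp (θ j * I) - lam) = 0) :=
  stmt_11_general n hn U V hV θ heig t
end
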